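/- arXiv:2201.04587 — 2 statements merged into one kernel-verified Lean document; each statement's English description precedes it below -/
import Mathlib

section
/- Let F be analytic on the closed right half-plane with |F(p)| ≤ C(1+|p|)^{-b}, b > 1, and define f(t) = (1/2π) ∫_ℝ e^{itη} F(iη) dη. Then f(0) = 0. -/
open Complex MeasureTheory Real Filter Topology intervalIntegral

/-!
Cauchy's theorem on the rectangle `[0, T] × [-T, T]` expresses the integral of `F` over the
segment `[-iT, iT]` of the imaginary axis through the integrals over the other three sides. Every
point `p` of those sides has `‖p‖ ≥ T`, so each is `O(T (1 + T)^(-b)) → 0` since `b > 1`. The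
truncated integrals converge to `∫ F(iη) dη` by integrability of the boundary values, which is
therefore `0`; this is `2π f(0)`.
-/

theorem integrable_of_norm_le_one_add_abs_rpow_neg {E : Type*} [NormedAddCommGroup E]
    {g : ℝ → E} {C b : ℝ} (hb : 1 < b) (hg : Continuous g)
    (hbd : ∀ y, ‖g y‖ ≤ C * (1 + |y|) ^ (-b)) : Integrable g :=
  ((integrable_one_add_norm (E := ℝ) (μ := volume) (by simpa using hb)).const_mul C).mono'
    hg.aestronglyMeasurable (ae_of_all _ fun y => by simpa using hbd y)

theorem tendsto_mul_one_add_rpow_neg_atTop {b : ℝ} (hb : 1 < b) :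
    Tendsto (fun T : ℝ => T * (1 + T) ^ (-b)) atTop (𝓝 0) := by
  have hdecay : Tendsto (fun T : ℝ => (1 + T) ^ (-(b - 1))) atTop (𝓝 0) :=
    (tendsto_rpow_neg_atTop (by linarith)).comp (tendsto_atTop_add_const_left _ _ tendsto_id)
  refine squeeze_zero' (eventually_ge_atTop 0 |>.mono fun T hT => by positivity)
    (eventually_ge_atTop 0 |>.mono fun T hT => ?_) hdecay
  calc T * (1 + T) ^ (-b) ≤ (1 + T) ^ (1 : ℝ) * (1 + T) ^ (-b) := by
        rw [rpow_one]; gcongr; linarith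
    _ = (1 + T) ^ (-(b - 1)) := by rw [← rpow_add (by linarith)]; ring_nf

theorem norm_intervalIntegral_I_mul_le {F : ℂ → ℂ} {T M : ℝ} (hT : 0 ≤ T)
    (hF : DifferentiableOn ℂ F {p | 0 ≤ p.re})
    (hM : ∀ p : ℂ, 0 ≤ p.re → T ≤ ‖p‖ → ‖F p‖ ≤ M) :
    ‖∫ y in (-T)..T, F (I * y)‖ ≤ 4 * T * M := by
  have hrect := integral_boundary_rect_eq_zero_of_differentiableOn F ⟨0, -T⟩ ⟨T, T⟩
    (hF.mono fun p hp => by simp_all [mem_reProdIm])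
  simp only [ofReal_zero, zero_add, smul_eq_mul] at hrect
  have hhoriz : ∀ c : ℝ, |c| = T → ‖∫ x in (0 : ℝ)..T, F (x + c * I)‖ ≤ M * T := by
    intro c hc
    refine (norm_integral_le_of_norm_le_const fun x hx => hM (x + c * I) ?_ ?_).trans_eq
      (by rw [sub_zero, abs_of_nonneg hT])
    · simpa using (Set.uIoc_of_le hT ▸ hx).1.le
    · simpa [hc] using abs_im_le_norm (x + c * I)
  have hvert : ‖∫ y in (-T)..T, F (T + y * I)‖ ≤ M * (2 * T) := by
    refine (norm_integral_le_of_norm_le_const fun y _ => hM (T + y * I) ?_ ?_).trans_eq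
      (by rw [sub_neg_eq_add, ← two_mul, abs_of_nonneg (by positivity)])
    · simpa using hT
    · simpa [abs_of_nonneg hT] using abs_re_le_norm (T + y * I)
  calc ‖∫ y in (-T)..T, F (I * y)‖ = ‖I * ∫ y in (-T)..T, F (y * I)‖ := by simp [mul_comm I]
    _ = ‖(∫ x in (0 : ℝ)..T, F (x + (-T : ℝ) * I)) - (∫ x in (0 : ℝ)..T, F (x + (T : ℝ) * I))
          + I * ∫ y in (-T)..T, F (T + y * I)‖ := by rw [sub_eq_zero.1 hrect]
    _ ≤ M * T + M * T + M * (2 * T) := by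
        refine (norm_add_le _ _).trans (add_le_add ((norm_sub_le _ _).trans (add_le_add ?_ ?_)) ?_)
        · exact hhoriz _ (by simp [abs_of_nonneg hT])
        · exact hhoriz _ (abs_of_nonneg hT)
        · simpa using hvert
    _ = 4 * T * M := by ring

theorem integral_I_mul_eq_zero {F : ℂ → ℂ} {C b : ℝ} (hb : 1 < b)
    (hF : DifferentiableOn ℂ F {p | 0 ≤ p.re})
    (hbd : ∀ p : ℂ, 0 ≤ p.re → ‖F p‖ ≤ C * (1 + ‖p‖) ^ (-b)) :
    ∫ y : ℝ, F (I * y) = 0 := by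
  have hC : 0 ≤ C := by simpa using (norm_nonneg _).trans (hbd 0 le_rfl)
  have hfar : ∀ T : ℝ, 0 ≤ T → ∀ p : ℂ, 0 ≤ p.re → T ≤ ‖p‖ → ‖F p‖ ≤ C * (1 + T) ^ (-b) :=
    fun T hT p hp hTp => (hbd p hp).trans <|
      mul_le_mul_of_nonneg_left
        (rpow_le_rpow_of_nonpos (by positivity) (by linarith) (by linarith)) hC
  have hint : Integrable fun y : ℝ => F (I * y) :=
    integrable_of_norm_le_one_add_abs_rpow_neg hb
      (hF.continuousOn.comp_continuous (by fun_prop) fun y => by simp)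
      fun y => by simpa using hbd (I * y) (by simp)
  refine tendsto_nhds_unique
    (intervalIntegral_tendsto_integral hint tendsto_neg_atTop_atBot tendsto_id) ?_
  refine squeeze_zero_norm' (eventually_ge_atTop 0 |>.mono fun T hT =>
    norm_intervalIntegral_I_mul_le hT hF (hfar T hT)) ?_
  simpa [mul_assoc, mul_left_comm] using (tendsto_mul_one_add_rpow_neg_atTop hb).const_mul (4 * C)

theorem stmt_2_general (F : ℂ → ℂ) (C b : ℝ) (hb : 1 < b)
    (hF : ∃ U : Set ℂ, IsOpen U ∧ {p : ℂ | 0 ≤ p.re} ⊆ U ∧ DifferentiableOn ℂ F U)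
    (hbd : ∀ p : ℂ, 0 ≤ p.re → ‖F p‖ ≤ C * (1 + ‖p‖) ^ (-b))
    (f : ℝ → ℂ)
    (hf : ∀ t : ℝ, f t = (1 / (2 * Real.pi) : ℂ) *
      ∫ η : ℝ, Complex.exp (Complex.I * t * η) * F (Complex.I * η)) :
    f 0 = 0 := by
  obtain ⟨U, -, hU, hFU⟩ := hF
  simp [hf, integral_I_mul_eq_zero hb (hFU.mono hU) hbd]

theorem stmt_2 (F : ℂ → ℂ) (C b : ℝ) (hC : 0 < C) (hb : 1 < b)
    (hF : ∃ U : Set ℂ, IsOpen U ∧ {p : ℂ | 0 ≤ p.re} ⊆ U ∧ DifferentiableOn ℂ F U)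
    (hbd : ∀ p : ℂ, 0 ≤ p.re → ‖F p‖ ≤ C * (1 + ‖p‖) ^ (-b))
    (f : ℝ → ℂ)
    (hf : ∀ t : ℝ, f t = (1 / (2 * Real.pi) : ℂ) *
      ∫ η : ℝ, Complex.exp (Complex.I * t * η) * F (Complex.I * η)) :
    f 0 = 0 :=
  stmt_2_general F C b hb hF hbd f hf
end

section
/- Let F be analytic on the closed right half-plane with |F(p)| ≤ C(1+|p|)^{-b}, b > 1, and define f(t) = (1/2π) ∫_ℝ e^{itη} F(iη) dη. Then for every q with Re q > 0, ∫_0^∞ e^{-qt} f(t) dt = F(q); i.e., F is the Laplace transform of f. -/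
/-!
Fubini and `∫₀^∞ e^{-(q - iη)t} dt = 1/(q - iη)` turn the Laplace transform of `f` into
`(1/2π) ∫ F(iη)/(q - iη) dη`, so what remains is Cauchy's formula for the right half-plane.
On a rectangle around `q`, Cauchy–Goursat for `dslope F q` and the winding integral of
`(p - q)⁻¹` (computed with logarithms) give Cauchy's formula. As the height of the rectangle
tends to infinity the horizontal sides vanish because `F` is bounded, so the integrals of
`F(p)/(p - q)` over two vertical lines on either side of `q` differ by `2πF(q)`; the decay of
`F` makes the integral over `Re p = σ` vanish as `σ → ∞`.
-/

open Complex MeasureTheory Real Set Filter Topology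
open scoped Interval

theorem Complex.log_neg_of_im_neg {z : ℂ} (h : z.im < 0) : log (-z) = log z + π * I := by
  apply Complex.ext <;> simp [log_re, log_im, arg_neg_eq_arg_add_pi_of_im_neg h]

theorem Complex.log_neg_of_im_pos {z : ℂ} (h : 0 < z.im) : log (-z) = log z - π * I := by
  apply Complex.ext <;> simp [log_re, log_im, arg_neg_eq_arg_sub_pi_of_im_pos h]

theorem integral_div_mul_add_eq_log_sub {a b : ℝ} {c d : ℂ}
    (h : ∀ x ∈ [[a, b]], x * c + d ∈ slitPlane) :
    ∫ x in a..b, c / (x * c + d) = log (b * c + d) - log (a * c + d) := by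
  refine intervalIntegral.integral_eq_sub_of_hasDerivAt (f := fun x : ℝ => log (x * c + d))
    (fun x hx => ?_) ?_
  · have := ((hasDerivAt_log (h x hx)).comp (x : ℂ) ((hasDerivAt_mul_const c).add_const d))
    simpa [div_eq_inv_mul] using this.comp_ofReal
  · exact (continuousOn_const.div (by fun_prop) fun x hx =>
      slitPlane_ne_zero (h x hx)).intervalIntegrable

section Rectangle

variable {E : Type*} [NormedAddCommGroup E] [NormedSpace ℂ E]

-- Counterclockwise when `z` is the lower left corner; this is the expression of Mathlib's
-- Cauchy–Goursat theorems `integral_boundary_rect_eq_zero_of_differentiableOn` etc.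
noncomputable def rectBoundaryIntegral (f : ℂ → E) (z w : ℂ) : E :=
  (∫ x : ℝ in z.re..w.re, f (x + z.im * I)) - (∫ x : ℝ in z.re..w.re, f (x + w.im * I)) +
    I • (∫ y : ℝ in z.im..w.im, f (w.re + y * I)) - I • ∫ y : ℝ in z.im..w.im, f (z.re + y * I)

theorem rectBoundaryIntegral_inv_sub {z w q : ℂ} (hre : q.re ∈ Ioo z.re w.re)
    (him : q.im ∈ Ioo z.im w.im) :
    rectBoundaryIntegral (fun p => (p - q)⁻¹) z w = 2 * π * I := by
  obtain ⟨hzr, hwr⟩ := hre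
  obtain ⟨hzi, hwi⟩ := him
  have horiz (c : ℝ) (hc : c ≠ q.im) : ∫ x : ℝ in z.re..w.re, ((x : ℂ) + c * I - q)⁻¹ =
      log (w.re + c * I - q) - log (z.re + c * I - q) := by
    have := integral_div_mul_add_eq_log_sub (a := z.re) (b := w.re) (c := 1) (d := c * I - q)
      fun x _ => by simp [mem_slitPlane_iff, sub_ne_zero, hc]
    simpa [add_sub_assoc] using this
  -- `s = ±1` keeps `s * (c + y * I - q)` in the right half-plane, where `log` is holomorphic.
  have vert (c s : ℝ) (hc : 0 < s * (c - q.re)) :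
      ∫ y : ℝ in z.im..w.im, ((c : ℂ) + y * I - q)⁻¹ =
        -I * (log (s * (c + w.im * I - q)) - log (s * (c + z.im * I - q))) := by
    have hs : (s : ℂ) ≠ 0 := ofReal_ne_zero.2 (by rintro rfl; simp at hc)
    have := integral_div_mul_add_eq_log_sub (a := z.im) (b := w.im) (c := s * I) (d := s * (c - q))
      fun x _ => by simp [mem_slitPlane_iff, hc]
    simp only [show ∀ x : ℝ, (x : ℂ) * (s * I) + s * (c - q) = s * (c + x * I - q) from
      fun x => by ring] at this
    rw [← this, ← intervalIntegral.integral_const_mul]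
    congr 1 with y
    rw [mul_div_mul_left _ _ hs, ← mul_div_assoc, neg_mul, I_mul_I, neg_neg, one_div]
  have hA : ((z.re : ℂ) + z.im * I - q).im < 0 := by simpa using hzi
  have hD : 0 < ((z.re : ℂ) + w.im * I - q).im := by simpa using hwi
  simp only [rectBoundaryIntegral, smul_eq_mul]
  rw [horiz z.im hzi.ne, horiz w.im hwi.ne', vert w.re 1 (by linarith),
    vert z.re (-1) (by linarith)]
  simp only [ofReal_one, one_mul, ofReal_neg, neg_one_mul, log_neg_of_im_neg hA,
    log_neg_of_im_pos hD]
  -- Only the left side crosses the branch cut of `log`; the jump there is the `2πI`.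
  linear_combination (log (w.re + z.im * I - q) - log (w.re + w.im * I - q)
    - log (z.re + z.im * I - q) + log (z.re + w.im * I - q) - 2 * π * I) * I_sq

theorem integral_dslope_comp [CompleteSpace E] {f : ℂ → E} {γ : ℝ → ℂ} {a b : ℝ} {q : ℂ}
    (hγ : Continuous γ) (hf : ContinuousOn (fun x => f (γ x)) [[a, b]])
    (hq : ∀ x ∈ [[a, b]], γ x ≠ q) :
    ∫ x in a..b, dslope f q (γ x) =
      (∫ x in a..b, (γ x - q)⁻¹ • f (γ x)) - (∫ x in a..b, (γ x - q)⁻¹) • f q := by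
  have hinv : ContinuousOn (fun x => (γ x - q)⁻¹) [[a, b]] :=
    (hγ.continuousOn.sub continuousOn_const).inv₀ fun x hx => sub_ne_zero.2 (hq x hx)
  rw [← intervalIntegral.integral_smul_const, ← intervalIntegral.integral_sub
    (f := fun x => (γ x - q)⁻¹ • f (γ x)) (g := fun x => (γ x - q)⁻¹ • f q)
    (hinv.smul hf).intervalIntegrable (hinv.smul continuousOn_const).intervalIntegrable]
  refine intervalIntegral.integral_congr fun x hx => ?_
  simp only [dslope_of_ne _ (hq x hx), slope_def_module, smul_sub]

theorem rectBoundaryIntegral_inv_sub_smul [CompleteSpace E] {f : ℂ → E} {z w q : ℂ}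
    (hf : DifferentiableOn ℂ f ([[z.re, w.re]] ×ℂ [[z.im, w.im]]))
    (hre : q.re ∈ Ioo z.re w.re) (him : q.im ∈ Ioo z.im w.im) :
    rectBoundaryIntegral (fun p => (p - q)⁻¹ • f p) z w = (2 * π * I) • f q := by
  have hq : [[z.re, w.re]] ×ℂ [[z.im, w.im]] ∈ 𝓝 q :=
    mem_of_superset ((isOpen_Ioo.reProdIm isOpen_Ioo).mem_nhds ⟨hre, him⟩)
      (reProdIm_subset_iff.2 (prod_mono (Ioo_subset_Icc_self.trans Icc_subset_uIcc)
        (Ioo_subset_Icc_self.trans Icc_subset_uIcc)))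
  have h0 := integral_boundary_rect_eq_zero_of_differentiableOn _ z w
    ((differentiableOn_dslope hq).2 hf)
  have hc := hf.continuousOn
  rw [integral_dslope_comp (by fun_prop) (hc.comp (by fun_prop) fun x hx => ?_) ?_,
    integral_dslope_comp (by fun_prop) (hc.comp (by fun_prop) fun x hx => ?_) ?_,
    integral_dslope_comp (by fun_prop) (hc.comp (by fun_prop) fun x hx => ?_) ?_,
    integral_dslope_comp (by fun_prop) (hc.comp (by fun_prop) fun x hx => ?_) ?_] at h0
  · rw [← rectBoundaryIntegral_inv_sub hre him]
    simp only [rectBoundaryIntegral] at h0 ⊢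
    linear_combination (norm := module) h0
  all_goals first
    | simp [mem_reProdIm, hx]
    | rintro x - rfl
      simp at hre him

end Rectangle

theorem Complex.norm_inv_le_inv_abs_re {z : ℂ} (h : z.re ≠ 0) : ‖z⁻¹‖ ≤ |z.re|⁻¹ := by
  rw [norm_inv]
  exact inv_anti₀ (abs_pos.2 h) (abs_re_le_norm z)

theorem Complex.norm_inv_le_inv_abs_im {z : ℂ} (h : z.im ≠ 0) : ‖z⁻¹‖ ≤ |z.im|⁻¹ := by
  rw [norm_inv]
  exact inv_anti₀ (abs_pos.2 h) (abs_im_le_norm z)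

theorem Complex.VerticalIntegrable.inv_sub_mul {F : ℂ → ℂ} {c : ℝ} {q : ℂ}
    (hF : VerticalIntegrable F c) (hc : c ≠ q.re) :
    VerticalIntegrable (fun p => (p - q)⁻¹ * F p) c := by
  refine hF.bdd_mul (c := |c - q.re|⁻¹) (Continuous.aestronglyMeasurable ?_) (ae_of_all _ ?_)
  · exact Continuous.inv₀ (by fun_prop) fun y h => hc (by simpa [sub_eq_zero] using congrArg re h)
  · exact fun y => by
      simpa using norm_inv_le_inv_abs_re (z := c + y * I - q) (by simpa [sub_eq_zero])

theorem integral_Ioi_exp_neg_mul_integral_exp_I_mul {g : ℝ → ℂ} (hg : Integrable g) {q : ℂ}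
    (hq : 0 < q.re) :
    ∫ t in Ioi (0 : ℝ), cexp (-q * t) * ∫ η : ℝ, cexp (I * t * η) * g η =
      ∫ η : ℝ, g η / (q - I * η) := by
  have hprod : Integrable (fun p : ℝ × ℝ => cexp (-q * p.1) * (cexp (I * p.1 * p.2) * g p.2))
      ((volume.restrict (Ioi 0)).prod volume) := by
    refine ((exp_neg_integrableOn_Ioi 0 hq).mul_prod hg.norm).mono' ?_ (ae_of_all _ fun p => ?_)
    · exact (Continuous.aestronglyMeasurable (by fun_prop)).mul
        ((Continuous.aestronglyMeasurable (by fun_prop)).mul hg.1.comp_snd)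
    · simp [norm_exp]
  simp_rw [← integral_const_mul]
  rw [integral_integral_swap hprod]
  congr 1 with η
  have hre : (-(q - I * η)).re < 0 := by simpa using hq
  have hexp (t : ℝ) : cexp (-q * t) * cexp (I * t * η) = cexp (-(q - I * η) * t) := by
    rw [← Complex.exp_add]; ring_nf
  simp_rw [← mul_assoc, hexp, integral_mul_const, integral_exp_mul_complex_Ioi hre]
  simp only [ofReal_zero, mul_zero, Complex.exp_zero, neg_div_neg_eq]
  ring

section RightHalfPlane

variable {F : ℂ → ℂ} {C b : ℝ}

theorem norm_le_of_decay (hC : 0 ≤ C) (hb : 0 ≤ b)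
    (hbd : ∀ p : ℂ, 0 ≤ p.re → ‖F p‖ ≤ C * (1 + ‖p‖) ^ (-b)) {p : ℂ} (hp : 0 ≤ p.re) :
    ‖F p‖ ≤ C :=
  (hbd p hp).trans <| mul_le_of_le_one_right hC <|
    rpow_le_one_of_one_le_of_nonpos (by linarith [norm_nonneg p]) (neg_nonpos.2 hb)

theorem norm_vertical_le_of_decay (hC : 0 ≤ C) (hb : 0 ≤ b)
    (hbd : ∀ p : ℂ, 0 ≤ p.re → ‖F p‖ ≤ C * (1 + ‖p‖) ^ (-b)) {c : ℝ} (hc : 0 ≤ c) (y : ℝ) :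
    ‖F (c + y * I)‖ ≤ C * (1 + |y|) ^ (-b) := by
  refine (hbd _ (by simpa using hc)).trans (mul_le_mul_of_nonneg_left ?_ hC)
  refine rpow_le_rpow_of_nonpos (by positivity) ?_ (neg_nonpos.2 hb)
  simpa using abs_im_le_norm (c + y * I : ℂ)

theorem integrable_one_add_abs_rpow_neg (hb : 1 < b) :
    Integrable fun y : ℝ => (1 + |y|) ^ (-b) := by
  simpa using integrable_one_add_norm (E := ℝ) (μ := volume) (r := b) (by simpa using hb)

theorem verticalIntegrable_of_decay (hF : ContinuousOn F {p | 0 ≤ p.re}) (hC : 0 ≤ C)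
    (hb : 1 < b) (hbd : ∀ p : ℂ, 0 ≤ p.re → ‖F p‖ ≤ C * (1 + ‖p‖) ^ (-b)) {c : ℝ}
    (hc : 0 ≤ c) : VerticalIntegrable F c := by
  refine ((integrable_one_add_abs_rpow_neg hb).const_mul C).mono' ?_
    (ae_of_all _ (norm_vertical_le_of_decay hC (by linarith) hbd hc))
  exact (hF.comp_continuous (by fun_prop) fun y => by simpa using hc).aestronglyMeasurable

theorem tendsto_integral_horizontal_of_decay (hC : 0 ≤ C) (hb : 0 ≤ b)
    (hbd : ∀ p : ℂ, 0 ≤ p.re → ‖F p‖ ≤ C * (1 + ‖p‖) ^ (-b)) (q : ℂ) {a₁ a₂ : ℝ}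
    (ha₁ : 0 ≤ a₁) (ha₂ : 0 ≤ a₂) :
    Tendsto (fun τ : ℝ => ∫ x in a₁..a₂, (x + τ * I - q)⁻¹ * F (x + τ * I)) (atBot ⊔ atTop)
      (𝓝 0) := by
  have hdist : Tendsto (fun τ => |τ - q.im|) (atBot ⊔ atTop) atTop :=
    tendsto_sup.2 ⟨tendsto_abs_atBot_atTop.comp (tendsto_atBot_add_const_right _ _ tendsto_id),
      tendsto_abs_atTop_atTop.comp (tendsto_atTop_add_const_right _ _ tendsto_id)⟩
  refine squeeze_zero_norm' ?_ (by simpa using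
    ((tendsto_inv_atTop_zero.comp hdist).mul_const C).mul_const |a₂ - a₁|)
  filter_upwards [hdist.eventually_gt_atTop 0] with τ hτ
  refine intervalIntegral.norm_integral_le_of_norm_le_const fun x hx => ?_
  have hx : 0 ≤ x := (le_min ha₁ ha₂).trans (uIoc_subset_uIcc hx).1
  rw [norm_mul]
  refine mul_le_mul ?_ (norm_le_of_decay hC hb hbd (by simpa using hx)) (norm_nonneg _)
    (by positivity)
  simpa using norm_inv_le_inv_abs_im (z := x + τ * I - q) (by simpa using hτ)

theorem tendsto_integral_vertical_of_decay (hC : 0 ≤ C) (hb : 1 < b)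
    (hbd : ∀ p : ℂ, 0 ≤ p.re → ‖F p‖ ≤ C * (1 + ‖p‖) ^ (-b)) (q : ℂ) :
    Tendsto (fun σ : ℝ => ∫ y : ℝ, (σ + y * I - q)⁻¹ * F (σ + y * I)) atTop (𝓝 0) := by
  have hdist : Tendsto (fun σ => |σ - q.re|) atTop atTop :=
    tendsto_abs_atTop_atTop.comp (tendsto_atTop_add_const_right _ _ tendsto_id)
  refine squeeze_zero_norm' ?_ (by simpa using
    (tendsto_inv_atTop_zero.comp hdist).mul_const (∫ y : ℝ, C * (1 + |y|) ^ (-b)))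
  filter_upwards [hdist.eventually_gt_atTop 0, eventually_ge_atTop 0] with σ hσ hσ₀
  rw [← integral_const_mul]
  refine norm_integral_le_of_norm_le
    (((integrable_one_add_abs_rpow_neg hb).const_mul C).const_mul _) (ae_of_all _ fun y => ?_)
  rw [norm_mul]
  refine mul_le_mul ?_ (norm_vertical_le_of_decay hC (by linarith) hbd hσ₀ y) (norm_nonneg _)
    (by positivity)
  simpa using norm_inv_le_inv_abs_re (z := σ + y * I - q) (by simpa using hσ)

theorem integral_vertical_sub_integral_vertical (hF : DifferentiableOn ℂ F {p | 0 ≤ p.re})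
    (hC : 0 ≤ C) (hb : 1 < b) (hbd : ∀ p : ℂ, 0 ≤ p.re → ‖F p‖ ≤ C * (1 + ‖p‖) ^ (-b))
    {q : ℂ} {c₁ c₂ : ℝ} (hc₁ : 0 ≤ c₁) (h₁ : c₁ < q.re) (h₂ : q.re < c₂) :
    (∫ y : ℝ, (c₂ + y * I - q)⁻¹ * F (c₂ + y * I)) -
      ∫ y : ℝ, (c₁ + y * I - q)⁻¹ * F (c₁ + y * I) = 2 * π * F q := by
  have hc₂ : 0 ≤ c₂ := by linarith
  have hvert {c : ℝ} (hc : 0 ≤ c) (hcq : c ≠ q.re) := intervalIntegral_tendsto_integral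
    ((verticalIntegrable_of_decay hF.continuousOn hC hb hbd hc).inv_sub_mul hcq)
    tendsto_neg_atTop_atBot tendsto_id
  have hhor := tendsto_integral_horizontal_of_decay hC (by linarith) hbd q hc₁ hc₂
  have hlim : Tendsto (fun T : ℝ => rectBoundaryIntegral (fun p => (p - q)⁻¹ • F p)
      ⟨c₁, -T⟩ ⟨c₂, T⟩) atTop (𝓝 (I * ((∫ y : ℝ, (c₂ + y * I - q)⁻¹ * F (c₂ + y * I)) -
        ∫ y : ℝ, (c₁ + y * I - q)⁻¹ * F (c₁ + y * I)))) := by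
    have := ((((hhor.mono_left le_sup_left).comp tendsto_neg_atTop_atBot).sub
      (hhor.mono_left le_sup_right)).add ((hvert hc₂ h₂.ne').const_mul I)).sub
      ((hvert hc₁ h₁.ne).const_mul I)
    simp only [Function.comp_def, id_eq, sub_zero, zero_add, ← mul_sub] at this
    simpa only [rectBoundaryIntegral, smul_eq_mul] using this
  have hrect : ∀ᶠ T : ℝ in atTop, rectBoundaryIntegral (fun p => (p - q)⁻¹ • F p)
      ⟨c₁, -T⟩ ⟨c₂, T⟩ = I * (2 * π * F q) := by
    filter_upwards [eventually_gt_atTop |q.im|] with T hT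
    rw [rectBoundaryIntegral_inv_sub_smul (hF.mono fun p hp => (le_min hc₁ hc₂).trans hp.1.1)
      ⟨h₁, h₂⟩ ⟨neg_lt_of_abs_lt hT, lt_of_abs_lt hT⟩, smul_eq_mul]
    ring
  exact mul_left_cancel₀ I_ne_zero
    (tendsto_nhds_unique hlim (tendsto_const_nhds.congr' (hrect.mono fun _ => Eq.symm)))

theorem integral_div_sub_I_mul_of_decay (hF : DifferentiableOn ℂ F {p | 0 ≤ p.re})
    (hC : 0 ≤ C) (hb : 1 < b) (hbd : ∀ p : ℂ, 0 ≤ p.re → ‖F p‖ ≤ C * (1 + ‖p‖) ^ (-b))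
    {q : ℂ} (hq : 0 < q.re) :
    ∫ y : ℝ, F (I * y) / (q - I * y) = 2 * π * F q := by
  set J : ℝ → ℂ := fun c => ∫ y : ℝ, (c + y * I - q)⁻¹ * F (c + y * I)
  have hJ : ∀ᶠ σ in atTop, J σ = J 0 + 2 * π * F q := by
    filter_upwards [eventually_gt_atTop q.re] with σ hσ
    rw [← integral_vertical_sub_integral_vertical hF hC hb hbd le_rfl hq hσ]
    ring
  have hJ0 : J 0 + 2 * π * F q = 0 := tendsto_nhds_unique tendsto_const_nhds
    ((tendsto_integral_vertical_of_decay hC hb hbd q).congr' hJ)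
  have hline : ∫ y : ℝ, F (I * y) / (q - I * y) = -J 0 := by
    rw [← integral_neg]
    congr 1 with y
    rw [div_eq_inv_mul, ← neg_mul, ← inv_neg, neg_sub]
    simp [mul_comm]
  linear_combination hline - hJ0

end RightHalfPlane

theorem stmt_4 (F : ℂ → ℂ) (C b : ℝ) (hC : 0 < C) (hb : 1 < b)
    (hF : ∃ U : Set ℂ, IsOpen U ∧ {p : ℂ | 0 ≤ p.re} ⊆ U ∧ DifferentiableOn ℂ F U)
    (hbd : ∀ p : ℂ, 0 ≤ p.re → ‖F p‖ ≤ C * (1 + ‖p‖) ^ (-b))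
    (f : ℝ → ℂ)
    (hf : ∀ t : ℝ, f t = (1 / (2 * Real.pi) : ℂ) *
      ∫ η : ℝ, Complex.exp (Complex.I * t * η) * F (Complex.I * η)) :
    ∀ q : ℂ, 0 < q.re →
      ∫ t in Set.Ioi (0 : ℝ), Complex.exp (-q * t) * f t = F q := by
  obtain ⟨U, -, hU, hFU⟩ := hF
  have hF' : DifferentiableOn ℂ F {p | 0 ≤ p.re} := hFU.mono hU
  intro q hq
  have hFI : Integrable fun η : ℝ => F (I * η) := by
    simpa [VerticalIntegrable, mul_comm] using
      verticalIntegrable_of_decay hF'.continuousOn hC.le hb hbd le_rfl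
  calc ∫ t in Ioi (0 : ℝ), cexp (-q * t) * f t
      = (1 / (2 * π) : ℂ) * ∫ t in Ioi (0 : ℝ), cexp (-q * t) *
          ∫ η : ℝ, cexp (I * t * η) * F (I * η) := by
        simp_rw [hf, mul_left_comm _ (1 / (2 * π) : ℂ), integral_const_mul]
    _ = (1 / (2 * π) : ℂ) * ∫ η : ℝ, F (I * η) / (q - I * η) := by
        rw [integral_Ioi_exp_neg_mul_integral_exp_I_mul hFI hq]
    _ = F q := by
        rw [integral_div_sub_I_mul_of_decay hF' hC.le hb hbd hq]
        field_simp
end
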